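/- Modulation property of the Q-QPFT: for f ∈ L¹(ℝ²,ℍ) and w₀ = (u₀, v₀) ∈ ℝ², defining the modulated signal (M_{w₀}f)(x) = e^{i x₁ u₀} f(x) e^{j x₂ v₀}, one has Q^ℍ_{μ₁,μ₂}[M_{w₀}f](w) = e^{i[(c₁u₀² - 2b₁c₁u₀w₁ - b₁e₁u₀)/b₁²]} · Q^ℍ_{μ₁,μ₂}[f](w₁ - u₀/b₁, w₂ - v₀/b₂) · e^{j[(c₂v₀² - 2b₂c₂v₀w₂ - b₂e₂v₀)/b₂²]}. -/

import Mathlib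

open MeasureTheory Complex
open scoped ENNReal

noncomputable section

abbrev ℍ := Quaternion ℝ

/-- Embedding of ℂ into ℍ along the i-axis. -/
def Ci (z : ℂ) : ℍ := ⟨z.re, z.im, 0, 0⟩
/-- Embedding of ℂ into ℍ along the j-axis. -/
def Cj (z : ℂ) : ℍ := ⟨z.re, 0, z.im, 0⟩

/-- principal square root in ℂ -/
def csqrt (z : ℂ) : ℂ := z ^ (1/2 : ℂ)

/-- quaternion exponential e^{iθ} -/
def expi (θ : ℝ) : ℍ := Ci (Complex.exp (θ * Complex.I))
/-- quaternion exponential e^{jθ} -/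
def expj (θ : ℝ) : ℍ := Cj (Complex.exp (θ * Complex.I))

structure QP where
  a : ℝ
  b : ℝ
  c : ℝ
  d : ℝ
  e : ℝ

def phase (μ : QP) (x w : ℝ) : ℝ :=
  μ.a * x^2 + μ.b * x * w + μ.c * w^2 + μ.d * x + μ.e * w

/-- left quadratic-phase kernel Λ^i_{μ}(x,w) -/
def kerI (μ : QP) (x w : ℝ) : ℍ :=
  Ci (csqrt (μ.b * Complex.I / (2 * Real.pi))) * expi (-(phase μ x w))

/-- right quadratic-phase kernel Λ^j_{μ}(x,w) -/
def kerJ (μ : QP) (x w : ℝ) : ℍ :=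
  Cj (csqrt (μ.b * Complex.I / (2 * Real.pi))) * expj (-(phase μ x w))

/-- two-sided quaternion quadratic-phase Fourier transform -/
def QQPFT (μ₁ μ₂ : QP) (f : ℝ × ℝ → ℍ) (w : ℝ × ℝ) : ℍ :=
  ∫ x : ℝ × ℝ, kerI μ₁ x.1 w.1 * f x * kerJ μ₂ x.2 w.2

/-- two-sided quaternion Fourier transform -/
def QFT (f : ℝ × ℝ → ℍ) (w : ℝ × ℝ) : ℍ :=
  (1 / (2 * Real.pi)) • ∫ x : ℝ × ℝ, expi (-(x.1 * w.1)) * f x * expj (-(x.2 * w.2))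

/-!
Multiplying the kernel `Λ^i_{μ₁}(x₁, w₁)` by `e^{i x₁ u₀}` gives the kernel at `w₁ - u₀/b₁` times a
phase depending only on `w₁`, because the shift of `w₁` absorbs the term linear in `x₁`; symmetrically
on the `j` side. Both phases lie in the same commutative subfield as the kernel they came from, so
they end up on the outer sides of the integrand and leave the integral. Constants leave the Bochner
integral even of a non-integrable integrand (both sides are then `0`), since multiplication by a
nonzero constant preserves integrability in both directions.
-/

section IntegralMul

variable {α A : Type*} [MeasurableSpace α] {μ : Measure α}
  [NormedDivisionRing A] [NormedAlgebra ℝ A] [CompleteSpace A]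

theorem integral_mul_const_of_divisionRing (b : A) (g : α → A) :
    ∫ x, g x * b ∂μ = (∫ x, g x ∂μ) * b := by
  rcases eq_or_ne b 0 with rfl | hb
  · simp
  exact ((ContinuousLinearMap.mul ℝ A).flip b).integral_comp_comm'
    (antilipschitzWith_mul_right hb) g

theorem integral_const_mul_mul_const (a b : A) (g : α → A) :
    ∫ x, a * g x * b ∂μ = a * (∫ x, g x ∂μ) * b := by
  rw [integral_mul_const_of_divisionRing]
  exact congrArg (· * b) (integral_smul a g)

end IntegralMul

theorem Ci_mul (z w : ℂ) : Ci (z * w) = Ci z * Ci w := by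
  ext <;>
    simp only [Quaternion.re_mul, Quaternion.imI_mul, Quaternion.imJ_mul, Quaternion.imK_mul] <;>
    simp [Ci, Complex.mul_re, Complex.mul_im]

theorem Cj_mul (z w : ℂ) : Cj (z * w) = Cj z * Cj w := by
  ext <;>
    simp only [Quaternion.re_mul, Quaternion.imI_mul, Quaternion.imJ_mul, Quaternion.imK_mul] <;>
    simp [Cj, Complex.mul_re, Complex.mul_im]

theorem phase_sub_div (μ : QP) (hb : μ.b ≠ 0) (u x w : ℝ) :
    phase μ x (w - u / μ.b) =
      phase μ x w - x * u + (μ.c * u^2 - 2 * μ.b * μ.c * u * w - μ.b * μ.e * u) / μ.b^2 := by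
  unfold phase
  field_simp
  ring

theorem kerI_mul_expi (μ : QP) (hb : μ.b ≠ 0) (u x w : ℝ) :
    kerI μ x w * expi (x * u) =
      expi ((μ.c * u^2 - 2 * μ.b * μ.c * u * w - μ.b * μ.e * u) / μ.b^2) *
        kerI μ x (w - u / μ.b) := by
  simp only [kerI, expi, ← Ci_mul]
  congr 1
  rw [phase_sub_div μ hb]
  push_cast
  simp only [neg_add, neg_sub, add_mul, sub_mul, neg_mul, Complex.exp_add, Complex.exp_sub,
    Complex.exp_neg]
  field_simp

theorem expj_mul_kerJ (μ : QP) (hb : μ.b ≠ 0) (v x w : ℝ) :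
    expj (x * v) * kerJ μ x w =
      kerJ μ x (w - v / μ.b) *
        expj ((μ.c * v^2 - 2 * μ.b * μ.c * v * w - μ.b * μ.e * v) / μ.b^2) := by
  simp only [kerJ, expj, ← Cj_mul]
  congr 1
  rw [phase_sub_div μ hb]
  push_cast
  simp only [neg_add, neg_sub, add_mul, sub_mul, neg_mul, Complex.exp_add, Complex.exp_sub,
    Complex.exp_neg]
  field_simp

theorem qqpft_modulation_general (μ₁ μ₂ : QP) (hb₁ : μ₁.b ≠ 0) (hb₂ : μ₂.b ≠ 0)
    (f : ℝ × ℝ → ℍ) (u₀ v₀ : ℝ) (w : ℝ × ℝ) :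
    QQPFT μ₁ μ₂ (fun x => expi (x.1 * u₀) * f x * expj (x.2 * v₀)) w
      = expi ((μ₁.c * u₀^2 - 2 * μ₁.b * μ₁.c * u₀ * w.1 - μ₁.b * μ₁.e * u₀) / μ₁.b^2) *
          QQPFT μ₁ μ₂ f (w.1 - u₀ / μ₁.b, w.2 - v₀ / μ₂.b) *
          expj ((μ₂.c * v₀^2 - 2 * μ₂.b * μ₂.c * v₀ * w.2 - μ₂.b * μ₂.e * v₀) / μ₂.b^2) := by
  rw [QQPFT, QQPFT, ← integral_const_mul_mul_const]
  congr 1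
  funext x
  calc kerI μ₁ x.1 w.1 * (expi (x.1 * u₀) * f x * expj (x.2 * v₀)) * kerJ μ₂ x.2 w.2
      = (kerI μ₁ x.1 w.1 * expi (x.1 * u₀)) * f x * (expj (x.2 * v₀) * kerJ μ₂ x.2 w.2) := by
        simp only [mul_assoc]
    _ = _ := by
        rw [kerI_mul_expi μ₁ hb₁, expj_mul_kerJ μ₂ hb₂]
        simp only [mul_assoc]

/-- Modulation property of the two-sided Q-QPFT. -/
theorem qqpft_modulation (μ₁ μ₂ : QP) (hb₁ : μ₁.b ≠ 0) (hb₂ : μ₂.b ≠ 0)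
    (f : ℝ × ℝ → ℍ) (hf : Integrable f) (u₀ v₀ : ℝ) (w : ℝ × ℝ) :
    QQPFT μ₁ μ₂ (fun x => expi (x.1 * u₀) * f x * expj (x.2 * v₀)) w
      = expi ((μ₁.c * u₀^2 - 2 * μ₁.b * μ₁.c * u₀ * w.1 - μ₁.b * μ₁.e * u₀) / μ₁.b^2) *
          QQPFT μ₁ μ₂ f (w.1 - u₀ / μ₁.b, w.2 - v₀ / μ₂.b) *
          expj ((μ₂.c * v₀^2 - 2 * μ₂.b * μ₂.c * v₀ * w.2 - μ₂.b * μ₂.e * v₀) / μ₂.b^2) :=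
  qqpft_modulation_general μ₁ μ₂ hb₁ hb₂ f u₀ v₀ w
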